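/- arXiv:1606.03722 — 3 statements merged into one kernel-verified Lean document; each statement's English description precedes it below -/
import Mathlib

section
/- Let A₁, A₂ be linearly independent 2×2 real symmetric matrices with det A₁ ≠ 0 and det A₂ ≠ 0, written A₁ = !![α₁, β₁; β₁, γ₁], A₂ = !![α₂, β₂; β₂, γ₂]. If (α₁γ₂ + α₂γ₁ − 2β₁β₂)² > 4 det(A₁) det(A₂), then there exist two linearly independent matrices B₁, B₂ in the real span of {A₁, A₂} with det B₁ = 0 and det B₂ = 0. -/
theorem stmt_3 (α₁ β₁ γ₁ α₂ β₂ γ₂ : ℝ)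
    (A₁ A₂ : Matrix (Fin 2) (Fin 2) ℝ)
    (hA₁ : A₁ = !![α₁, β₁; β₁, γ₁]) (hA₂ : A₂ = !![α₂, β₂; β₂, γ₂])
    (hli : LinearIndependent ℝ ![A₁, A₂])
    (hd₁ : A₁.det ≠ 0) (hd₂ : A₂.det ≠ 0)
    (h : (α₁ * γ₂ + α₂ * γ₁ - 2 * β₁ * β₂) ^ 2 > 4 * A₁.det * A₂.det) :
    ∃ B₁ B₂ : Matrix (Fin 2) (Fin 2) ℝ,
      B₁ ∈ Submodule.span ℝ {A₁, A₂} ∧ B₂ ∈ Submodule.span ℝ {A₁, A₂} ∧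
      LinearIndependent ℝ ![B₁, B₂] ∧ B₁.det = 0 ∧ B₂.det = 0 := by
  set d₁ := A₁.det with hd1def
  set d₂ := A₂.det with hd2def
  set b := α₁ * γ₂ + α₂ * γ₁ - 2 * β₁ * β₂ with hb
  have hD : b ^ 2 - 4 * d₁ * d₂ > 0 := by linarith
  set s := Real.sqrt (b ^ 2 - 4 * d₁ * d₂) with hs
  have hspos : 0 < s := Real.sqrt_pos.mpr hD
  have hs2 : s ^ 2 = b ^ 2 - 4 * d₁ * d₂ := Real.sq_sqrt hD.le
  set t₁ := (-b + s) / (2 * d₁) with ht1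
  set t₂ := (-b - s) / (2 * d₁) with ht2
  have hdiff : t₁ - t₂ = s / d₁ := by
    rw [ht1, ht2]; field_simp; ring
  have htne : t₁ ≠ t₂ := by
    intro hEq
    have : s / d₁ = 0 := by rw [← hdiff]; linarith
    rcases div_eq_zero_iff.mp this with h' | h'
    · linarith
    · exact hd₁ h'
  have hdet : ∀ t : ℝ, (t • A₁ + A₂).det = d₁ * t ^ 2 + b * t + d₂ := by
    intro t
    have e1 : d₁ = α₁ * γ₁ - β₁ * β₁ := by rw [hd1def, hA₁, Matrix.det_fin_two]; simp
    have e2 : d₂ = α₂ * γ₂ - β₂ * β₂ := by rw [hd2def, hA₂, Matrix.det_fin_two]; simp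
    rw [hA₁, hA₂]
    simp [Matrix.det_fin_two, Matrix.add_apply, Matrix.smul_apply, e1, e2, hb]
    ring
  have hroot : ∀ t ∈ ({t₁, t₂} : Set ℝ), d₁ * t ^ 2 + b * t + d₂ = 0 := by
    intro t ht
    rcases ht with rfl | rfl
    · rw [ht1]; field_simp; nlinarith [hs2]
    · rw [ht2]; field_simp; nlinarith [hs2]
  refine ⟨t₁ • A₁ + A₂, t₂ • A₁ + A₂, ?_, ?_, ?_, ?_, ?_⟩
  · exact Submodule.add_mem _
      (Submodule.smul_mem _ _ (Submodule.subset_span (Set.mem_insert _ _)))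
      (Submodule.subset_span (Set.mem_insert_of_mem _ rfl))
  · exact Submodule.add_mem _
      (Submodule.smul_mem _ _ (Submodule.subset_span (Set.mem_insert _ _)))
      (Submodule.subset_span (Set.mem_insert_of_mem _ rfl))
  · rw [LinearIndependent.pair_iff]
    intro x y hxy
    rw [LinearIndependent.pair_iff] at hli
    have hxy' : (x * t₁ + y * t₂) • A₁ + (x + y) • A₂ = 0 := by
      rw [add_smul, add_smul, mul_smul, mul_smul]
      rw [smul_add, smul_add] at hxy
      abel_nf
      abel_nf at hxy
      convert hxy using 2 <;> module
    obtain ⟨h1, h2⟩ := hli _ _ hxy'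
    have hx : x = 0 := by
      have : x * (t₁ - t₂) = 0 := by linear_combination h1 - t₂ * h2
      rcases mul_eq_zero.mp this with hx | hx
      · exact hx
      · exact absurd (by linarith) htne
    exact ⟨hx, by linarith⟩
  · rw [hdet t₁]; exact hroot t₁ (Set.mem_insert _ _)
  · rw [hdet t₂]; exact hroot t₂ (Set.mem_insert_of_mem _ rfl)
end

section
/- Conversely, let A₁, A₂ be linearly independent 2×2 real symmetric matrices with det A₁ ≠ 0, written with entries αᵢ, βᵢ, γᵢ as A₁ = !![α₁, β₁; β₁, γ₁], A₂ = !![α₂, β₂; β₂, γ₂]. If there exist two linearly independent matrices B₁, B₂ in the span of {A₁, A₂} with det B₁ = det B₂ = 0, then (α₁γ₂ + α₂γ₁ − 2β₁β₂)² > 4 det(A₁) det(A₂). -/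
theorem stmt_4 (α₁ β₁ γ₁ α₂ β₂ γ₂ : ℝ)
    (A₁ A₂ : Matrix (Fin 2) (Fin 2) ℝ)
    (hA₁ : A₁ = !![α₁, β₁; β₁, γ₁]) (hA₂ : A₂ = !![α₂, β₂; β₂, γ₂])
    (hli : LinearIndependent ℝ ![A₁, A₂])
    (hd₁ : A₁.det ≠ 0)
    (h : ∃ B₁ B₂ : Matrix (Fin 2) (Fin 2) ℝ,
      B₁ ∈ Submodule.span ℝ {A₁, A₂} ∧ B₂ ∈ Submodule.span ℝ {A₁, A₂} ∧
      LinearIndependent ℝ ![B₁, B₂] ∧ B₁.det = 0 ∧ B₂.det = 0) :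
    (α₁ * γ₂ + α₂ * γ₁ - 2 * β₁ * β₂) ^ 2 > 4 * A₁.det * A₂.det := by
  obtain ⟨B₁, B₂, hB₁, hB₂, hliB, hd1, hd2⟩ := h
  obtain ⟨ν₁, μ₁, e₁⟩ := Submodule.mem_span_pair.mp hB₁
  obtain ⟨ν₂, μ₂, e₂⟩ := Submodule.mem_span_pair.mp hB₂
  set a : ℝ := α₁*γ₁ - β₁^2 with ha
  set c : ℝ := α₂*γ₂ - β₂^2 with hc
  set m : ℝ := α₁*γ₂ + α₂*γ₁ - 2*β₁*β₂ with hm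
  have hdet : ∀ ν μ : ℝ, (ν • A₁ + μ • A₂).det = a*ν^2 + m*(ν*μ) + c*μ^2 := by
    intro ν μ
    rw [hA₁, hA₂]
    simp [Matrix.det_fin_two]
    ring
  have hdA1 : A₁.det = a := by rw [hA₁]; simp [Matrix.det_fin_two]; ring
  have hdA2 : A₂.det = c := by rw [hA₂]; simp [Matrix.det_fin_two]; ring
  have ha0 : a ≠ 0 := by rwa [hdA1] at hd₁
  have E₁ : a*ν₁^2 + m*(ν₁*μ₁) + c*μ₁^2 = 0 := by rw [← hdet, e₁]; exact hd1
  have E₂ : a*ν₂^2 + m*(ν₂*μ₂) + c*μ₂^2 = 0 := by rw [← hdet, e₂]; exact hd2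
  have hliB' := LinearIndependent.pair_iff.mp hliB
  have hB1ne : B₁ ≠ 0 := by
    intro h0
    have := (hliB' 1 0 (by simp [h0])).1
    norm_num at this
  have hB2ne : B₂ ≠ 0 := by
    intro h0
    have := (hliB' 0 1 (by simp [h0])).2
    norm_num at this
  have hμ : ∀ ν μ : ℝ, ν • A₁ + μ • A₂ ≠ 0 →
      a*ν^2 + m*(ν*μ) + c*μ^2 = 0 → μ ≠ 0 := by
    intro ν μ hne hz hμ0
    subst hμ0
    simp only [mul_zero, zero_pow, add_zero, mul_zero, ne_eq] at hz
    have hν : ν = 0 := by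
      have : a * ν^2 = 0 := by linarith
      rcases mul_eq_zero.mp this with h' | h'
      · exact absurd h' ha0
      · exact pow_eq_zero_iff (by norm_num) |>.mp h'
    apply hne
    simp [hν]
  have hμ₁ : μ₁ ≠ 0 := hμ ν₁ μ₁ (by rw [e₁]; exact hB1ne) E₁
  have hμ₂ : μ₂ ≠ 0 := hμ ν₂ μ₂ (by rw [e₂]; exact hB2ne) E₂
  set D : ℝ := ν₁*μ₂ - ν₂*μ₁ with hD
  have hDne : D ≠ 0 := by
    intro hD0
    have hz : μ₂ • B₁ + (-μ₁) • B₂ = 0 := by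
      rw [← e₁, ← e₂]
      have : μ₂ • (ν₁ • A₁ + μ₁ • A₂) + (-μ₁) • (ν₂ • A₁ + μ₂ • A₂)
          = D • A₁ := by
        simp only [smul_add, smul_smul, hD]
        module
      rw [this, hD0, zero_smul]
    exact hμ₂ (hliB' μ₂ (-μ₁) hz).1
  -- solve for m and c
  have hmeq : m * (μ₁*μ₂) * D = -a * D * (ν₁*μ₂ + ν₂*μ₁) := by
    linear_combination μ₂^2 * E₁ - μ₁^2 * E₂
  have hceq : c * (μ₁*μ₂) * D = a * ν₁*ν₂ * D := by
    linear_combination -(ν₂*μ₂) * E₁ + (ν₁*μ₁) * E₂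
  have hm' : m * (μ₁*μ₂) = -a * (ν₁*μ₂ + ν₂*μ₁) :=
    mul_right_cancel₀ hDne (by linarith [hmeq])
  have hc' : c * (μ₁*μ₂) = a * ν₁ * ν₂ :=
    mul_right_cancel₀ hDne (by linarith [hceq])
  have key : (m^2 - 4*a*c) * (μ₁*μ₂)^2 = a^2 * D^2 := by
    linear_combination (m*(μ₁*μ₂) + -a*(ν₁*μ₂+ν₂*μ₁)) * hm' - 4*a*μ₁*μ₂ * hc'
  have hpos : (0:ℝ) < (μ₁*μ₂)^2 := by positivity
  have hrhs : (0:ℝ) < a^2 * D^2 := by positivity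
  have : 0 < m^2 - 4*a*c := by
    by_contra hle
    push_neg at hle
    nlinarith
  rw [hdA1, hdA2]
  simp only [hm] at this ⊢
  linarith
end

section
/- Let A₁, A₂, A₃ be linearly independent 3×3 real symmetric matrices with det A₁ = det A₂ = 0. Suppose that for all ν, μ ∈ ℝ, det(A₃ + ν A₁ + μ A₂) ≠ 0. Then, writing det(A₃ + ν A₁ + μ A₂) = c₁ν²μ + c₂νμ² + c₃νμ + c₄ν² + c₅μ² + c₆ν + c₇μ + det(A₃) as a polynomial in (ν, μ), one has c₁ = 0 and c₂ = 0. -/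
open Polynomial Filter

lemma quintic_root_pos (a b c d e f : ℝ) (ha : 0 < a) :
    ∃ x : ℝ, a*x^5 + b*x^4 + c*x^3 + d*x^2 + e*x + f = 0 := by
  set P : ℝ[X] := C a*X^5 + C b*X^4 + C c*X^3 + C d*X^2 + C e*X + C f with hP
  set Q : ℝ[X] := C a*X^5 - C b*X^4 + C c*X^3 - C d*X^2 + C e*X - C f with hQ
  have hPd : P.natDegree = 5 := by rw [hP]; compute_degree!; exact ha.ne'
  have hQd : Q.natDegree = 5 := by rw [hQ]; compute_degree!; exact ha.ne'
  have hPdeg : 0 < P.degree := by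
    rw [degree_eq_natDegree (by intro h; simp [h] at hPd), hPd]; norm_num
  have hQdeg : 0 < Q.degree := by
    rw [degree_eq_natDegree (by intro h; simp [h] at hQd), hQd]; norm_num
  have hPlc : P.leadingCoeff = a := by
    rw [Polynomial.leadingCoeff, hPd]
    simp [hP, coeff_C]
  have hQlc : Q.leadingCoeff = a := by
    rw [Polynomial.leadingCoeff, hQd]
    simp [hQ, coeff_C]
  have htop : Tendsto (fun x => P.eval x) atTop atTop :=
    P.tendsto_atTop_of_leadingCoeff_nonneg hPdeg (hPlc ▸ ha.le)
  have hQtop : Tendsto (fun x => Q.eval x) atTop atTop :=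
    Q.tendsto_atTop_of_leadingCoeff_nonneg hQdeg (hQlc ▸ ha.le)
  have hbot : Tendsto (fun x => P.eval x) atBot atBot := by
    have hcomp : Tendsto (fun x : ℝ => Q.eval (-x)) atBot atTop :=
      hQtop.comp tendsto_neg_atBot_atTop
    have heq : ∀ x : ℝ, P.eval x = - Q.eval (-x) := by
      intro x; simp [hP, hQ]; ring
    have := tendsto_neg_atTop_atBot.comp hcomp
    simp only [Function.comp_def] at this
    convert this using 2 with x
    rw [heq]
  obtain ⟨x, hx⟩ := (P.continuous_aeval.surjective htop hbot) 0
  refine ⟨x, ?_⟩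
  simpa [hP] using hx

lemma quintic_root (a b c d e f : ℝ) (ha : a ≠ 0) :
    ∃ x : ℝ, a*x^5 + b*x^4 + c*x^3 + d*x^2 + e*x + f = 0 := by
  rcases ha.lt_or_gt with h | h
  · obtain ⟨x, hx⟩ := quintic_root_pos (-a) (-b) (-c) (-d) (-e) (-f) (by linarith)
    exact ⟨x, by linarith⟩
  · exact quintic_root_pos a b c d e f h

theorem stmt_10 (A₁ A₂ A₃ : Matrix (Fin 3) (Fin 3) ℝ)
    (hA₁ : A₁.IsSymm) (hA₂ : A₂.IsSymm) (hA₃ : A₃.IsSymm)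
    (hli : LinearIndependent ℝ ![A₁, A₂, A₃])
    (hd₁ : A₁.det = 0) (hd₂ : A₂.det = 0)
    (hnz : ∀ ν μ : ℝ, (A₃ + ν • A₁ + μ • A₂).det ≠ 0)
    (c₁ c₂ c₃ c₄ c₅ c₆ c₇ : ℝ)
    (hpoly : ∀ ν μ : ℝ, (A₃ + ν • A₁ + μ • A₂).det =
      c₁ * ν ^ 2 * μ + c₂ * ν * μ ^ 2 + c₃ * ν * μ + c₄ * ν ^ 2 + c₅ * μ ^ 2 +
        c₆ * ν + c₇ * μ + A₃.det) :
    c₁ = 0 ∧ c₂ = 0 := by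
  constructor
  · by_contra h₁
    obtain ⟨x, hx⟩ := quintic_root c₁ (c₂ + c₄) c₃ (c₅ + c₆) c₇ A₃.det h₁
    exact hnz (x ^ 2) x (by rw [hpoly]; linear_combination hx)
  · by_contra h₂
    obtain ⟨x, hx⟩ := quintic_root c₂ (c₁ + c₅) c₃ (c₄ + c₇) c₆ A₃.det h₂
    exact hnz x (x ^ 2) (by rw [hpoly]; linear_combination hx)
end
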